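/- arXiv:2410.08426 — 5 statements merged into one kernel-verified Lean document; each statement's English description precedes it below -/
import Mathlib

section
/- Let V : (0,T) → ℝ^{n×n} be a C¹ matrix-valued function satisfying V'(t) + V(t)* P(t) V(t) + D(t) = 0, where P(t) is symmetric with y* P(t) y ≥ (1/M)|y|² for all y and |y* D(t) y| < M R² for all unit vectors y, with M, R > 0 and T > 2. Then for every unit vector x and every t with 1 < t < T − 1 one has |x* V(t) x| ≤ M R coth(R). -/
/-!
Along a unit vector `x`, the scalar `f = xᵀ V x` satisfies the strict Riccati inequality
`f' < M R² - f² / M`: the term `(Vx)ᵀ P (Vx)` is at least `|Vx|² / M ≥ f² / M` by Cauchy–Schwarz.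
The function `g(s) = M R coth (R (s - b))` solves `g' = M R² - g² / M` exactly and tends to `-∞`
as `s → b⁻`. If `f` were `≤ -M R coth R` at time `a = b - 1`, comparison with `g` would force `f`
to `-∞` before time `b`, which is impossible for a function continuous on `[a, b]`. Hence
`f > -M R coth R` wherever the inequality holds for one unit of time to the right; applying this
to `s ↦ -f (2t - s)`, which satisfies the same inequality, gives the upper bound.
-/

open Set Filter Topology Matrix Real

section Scalar

variable {M R L : ℝ}

lemma hasDerivAt_mul_coth (hM : M ≠ 0) (R b : ℝ) {s : ℝ} (hs : sinh (R * (s - b)) ≠ 0) :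
    HasDerivAt (fun s => M * R * (cosh (R * (s - b)) / sinh (R * (s - b))))
      (M * R ^ 2 - (M * R * (cosh (R * (s - b)) / sinh (R * (s - b)))) ^ 2 / M) s := by
  have hu : HasDerivAt (fun s : ℝ => R * (s - b)) R s := by
    simpa using ((hasDerivAt_id s).sub_const b).const_mul R
  refine ((hu.cosh.div hu.sinh hs).const_mul (M * R)).congr_deriv ?_
  field_simp

lemma tendsto_mul_coth_nhdsLT_atBot (hM : 0 < M) (hR : 0 < R) (b : ℝ) :
    Tendsto (fun s => M * R * (cosh (R * (s - b)) / sinh (R * (s - b)))) (𝓝[<] b) atBot := by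
  have hcosh : Tendsto (fun s => cosh (R * (s - b))) (𝓝[<] b) (𝓝 1) := by
    have hcont : Continuous fun s => cosh (R * (s - b)) := by fun_prop
    simpa using (hcont.tendsto b).mono_left nhdsWithin_le_nhds
  have hsinh : Tendsto (fun s => sinh (R * (s - b))) (𝓝[<] b) (𝓝[<] 0) := by
    refine tendsto_nhdsWithin_iff.2 ⟨?_, ?_⟩
    · have hcont : Continuous fun s => sinh (R * (s - b)) := by fun_prop
      simpa using (hcont.tendsto b).mono_left nhdsWithin_le_nhds
    · filter_upwards [self_mem_nhdsWithin] with s hs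
      exact sinh_neg_iff.2 (mul_neg_of_pos_of_neg hR (sub_neg.2 hs))
  simp only [div_eq_mul_inv]
  exact (hcosh.pos_mul_atBot one_pos hsinh.inv_tendsto_nhdsLT_zero).const_mul_atBot
    (mul_pos hM hR)

theorem neg_mul_coth_lt_of_riccati_ineq (hM : 0 < M) (hR : 0 < R) (hL : 0 < L) {a : ℝ}
    {f f' : ℝ → ℝ} (hf : ∀ s ∈ Icc a (a + L), HasDerivAt f (f' s) s)
    (hf' : ∀ s ∈ Icc a (a + L), f' s < M * R ^ 2 - f s ^ 2 / M) :
    -(M * R * (cosh (R * L) / sinh (R * L))) < f a := by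
  by_contra! hfa
  set b := a + L
  set g : ℝ → ℝ := fun s => M * R * (cosh (R * (s - b)) / sinh (R * (s - b)))
  have hsinh : ∀ s < b, sinh (R * (s - b)) ≠ 0 := fun s hs =>
    (sinh_neg_iff.2 (mul_neg_of_pos_of_neg hR (sub_neg.2 hs))).ne
  have hfc : ContinuousOn f (Icc a b) := fun s hs => (hf s hs).continuousAt.continuousWithinAt
  obtain ⟨c, -, hc⟩ := isCompact_Icc.exists_isMinOn (nonempty_Icc.2 (by linarith)) hfc
  obtain ⟨b', hgb', hb'⟩ := ((tendsto_mul_coth_nhdsLT_atBot hM hR b).eventually_lt_atBot (f c)).and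
    (Ioo_mem_nhdsLT (show a < b by linarith)) |>.exists
  have hsub : Icc a b' ⊆ Icc a b := Icc_subset_Icc le_rfl hb'.2.le
  have hg : ∀ s ∈ Icc a b', HasDerivAt g (M * R ^ 2 - g s ^ 2 / M) s := fun s hs =>
    hasDerivAt_mul_coth hM.ne' R b (hsinh s (by linarith [hs.2, hb'.2]))
  have hga : g a = -(M * R * (cosh (R * L) / sinh (R * L))) := by
    simp only [g, b, show R * (a - (a + L)) = -(R * L) by ring, cosh_neg, sinh_neg, div_neg,
      mul_neg]
  have hfg : f b' ≤ g b' :=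
    image_le_of_deriv_right_lt_deriv_boundary' (hfc.mono hsub)
      (fun s hs => (hf s (hsub (Ico_subset_Icc_self hs))).hasDerivWithinAt) (hfa.trans_eq hga.symm)
      (fun s hs => (hg s hs).continuousAt.continuousWithinAt)
      (fun s hs => (hg s (Ico_subset_Icc_self hs)).hasDerivWithinAt)
      (fun s hs hfgs => by rw [← hfgs]; exact hf' s (hsub (Ico_subset_Icc_self hs)))
      (right_mem_Icc.2 hb'.1.le)
  have hmin : f c ≤ f b' := hc (hsub (right_mem_Icc.2 hb'.1.le))
  exact (hfg.trans_lt hgb').not_ge hmin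

theorem abs_lt_mul_coth_of_riccati_ineq (hM : 0 < M) (hR : 0 < R) (hL : 0 < L) {t : ℝ}
    {f f' : ℝ → ℝ} (hf : ∀ s ∈ Icc (t - L) (t + L), HasDerivAt f (f' s) s)
    (hf' : ∀ s ∈ Icc (t - L) (t + L), f' s < M * R ^ 2 - f s ^ 2 / M) :
    |f t| < M * R * (cosh (R * L) / sinh (R * L)) := by
  have hlow := neg_mul_coth_lt_of_riccati_ineq hM hR hL (a := t)
    (fun s hs => hf s ⟨by linarith [hs.1], hs.2⟩) (fun s hs => hf' s ⟨by linarith [hs.1], hs.2⟩)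
  have hmem : ∀ s ∈ Icc t (t + L), 2 * t - s ∈ Icc (t - L) (t + L) := fun s hs =>
    ⟨by linarith [hs.2], by linarith [hs.1]⟩
  have hup := neg_mul_coth_lt_of_riccati_ineq hM hR hL (a := t)
    (f := fun s => -f (2 * t - s)) (f' := fun s => f' (2 * t - s))
    (fun s hs => by
      simpa using ((hf _ (hmem s hs)).comp_const_sub (2 * t) s).fun_neg)
    (fun s hs => by simpa only [neg_sq] using hf' _ (hmem s hs))
  simp only [show 2 * t - t = t by ring] at hup
  exact abs_lt.2 ⟨hlow, by linarith⟩

end Scalar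

section QuadraticForm

variable {ι : Type*} [Fintype ι]

lemma dotProduct_sq_le_dotProduct_self_mul_dotProduct_self (x y : ι → ℝ) :
    (x ⬝ᵥ y) ^ 2 ≤ (x ⬝ᵥ x) * (y ⬝ᵥ y) := by
  simpa [dotProduct, sq] using Finset.sum_mul_sq_le_sq_mul_sq Finset.univ x y

lemma hasDerivAt_dotProduct_mulVec {κ : Type*} [Fintype κ] {V : ℝ → Matrix ι κ ℝ}
    {V' : Matrix ι κ ℝ} {t : ℝ} (hV : ∀ i j, HasDerivAt (fun s => V s i j) (V' i j) t)
    (x : ι → ℝ) (y : κ → ℝ) :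
    HasDerivAt (fun s => x ⬝ᵥ (V s *ᵥ y)) (x ⬝ᵥ (V' *ᵥ y)) t :=
  HasDerivAt.fun_sum fun i _ =>
    (HasDerivAt.fun_sum fun j _ => (hV i j).mul_const (y j)).const_mul (x i)

lemma dotProduct_mulVec_lt_of_riccati {M c : ℝ} (hM : 0 < M) {V V' P D : Matrix ι ι ℝ}
    (hRic : V' + Vᵀ * P * V + D = 0) (hP : ∀ y, (1 / M) * (y ⬝ᵥ y) ≤ y ⬝ᵥ (P *ᵥ y))
    {x : ι → ℝ} (hx : x ⬝ᵥ x = 1) (hD : -c < x ⬝ᵥ (D *ᵥ x)) :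
    x ⬝ᵥ (V' *ᵥ x) < c - (x ⬝ᵥ (V *ᵥ x)) ^ 2 / M := by
  set w := V *ᵥ x
  have hV' : x ⬝ᵥ (V' *ᵥ x) = -(w ⬝ᵥ (P *ᵥ w)) - x ⬝ᵥ (D *ᵥ x) := by
    rw [eq_neg_of_add_eq_zero_left ((add_assoc V' _ _).symm.trans hRic), neg_mulVec, add_mulVec,
      ← mulVec_mulVec, ← mulVec_mulVec, dotProduct_neg, dotProduct_add, dotProduct_mulVec x Vᵀ,
      vecMul_transpose]
    ring
  have hCS : (x ⬝ᵥ w) ^ 2 / M ≤ (1 / M) * (w ⬝ᵥ w) := by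
    rw [div_eq_mul_one_div, mul_comm]
    gcongr
    simpa [hx] using dotProduct_sq_le_dotProduct_self_mul_dotProduct_self x w
  linarith [hP w]

end QuadraticForm

theorem riccati_quadratic_form_bound_general
    (n : ℕ) (T M R : ℝ) (hM : 0 < M) (hR : 0 < R)
    (P D V V' : ℝ → Matrix (Fin n) (Fin n) ℝ)
    (hPpos : ∀ t ∈ Set.Ioo (0:ℝ) T, ∀ y : Fin n → ℝ,
      y ⬝ᵥ (P t *ᵥ y) ≥ (1 / M) * (y ⬝ᵥ y))
    (hDbd : ∀ t ∈ Set.Ioo (0:ℝ) T, ∀ y : Fin n → ℝ, y ⬝ᵥ y = 1 →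
      |y ⬝ᵥ (D t *ᵥ y)| < M * R ^ 2)
    (hV : ∀ t ∈ Set.Ioo (0:ℝ) T, ∀ i j,
      HasDerivAt (fun s => V s i j) (V' t i j) t)
    (hRic : ∀ t ∈ Set.Ioo (0:ℝ) T,
      V' t + (V t)ᵀ * P t * V t + D t = 0) :
    ∀ x : Fin n → ℝ, x ⬝ᵥ x = 1 → ∀ t ∈ Set.Ioo (1:ℝ) (T - 1),
      |x ⬝ᵥ (V t *ᵥ x)| ≤ M * R * (Real.cosh R / Real.sinh R) := by
  intro x hx t ht
  have hsub : Icc (t - 1) (t + 1) ⊆ Ioo 0 T :=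
    Icc_subset_Ioo (by linarith [ht.1]) (by linarith [ht.2])
  have hbound := abs_lt_mul_coth_of_riccati_ineq hM hR one_pos
    (f := fun s => x ⬝ᵥ (V s *ᵥ x)) (f' := fun s => x ⬝ᵥ (V' s *ᵥ x))
    (fun s hs => hasDerivAt_dotProduct_mulVec (hV s (hsub hs)) x x)
    (fun s hs => dotProduct_mulVec_lt_of_riccati hM (hRic s (hsub hs)) (hPpos s (hsub hs)) hx
      (neg_lt_of_abs_lt (hDbd s (hsub hs) x hx)))
  simpa only [mul_one] using hbound.le

/-- Bound for solutions of the matrix Riccati equation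
`V' + Vᵀ P V + D = 0` on `(0,T)`:  if `P` is symmetric with
`yᵀ P y ≥ |y|²/M` and `|yᵀ D y| < M R²` on unit vectors, then
`|xᵀ V(t) x| ≤ M R coth R` for all unit `x` and `1 < t < T - 1`. -/
theorem riccati_quadratic_form_bound
    (n : ℕ) (T M R : ℝ) (hT : 2 < T) (hM : 0 < M) (hR : 0 < R)
    (P D V V' : ℝ → Matrix (Fin n) (Fin n) ℝ)
    (hPcont : ∀ i j, ContinuousOn (fun t => P t i j) (Set.Ioo 0 T))
    (hDcont : ∀ i j, ContinuousOn (fun t => D t i j) (Set.Ioo 0 T))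
    (hPsymm : ∀ t ∈ Set.Ioo (0:ℝ) T, (P t)ᵀ = P t)
    (hPpos : ∀ t ∈ Set.Ioo (0:ℝ) T, ∀ y : Fin n → ℝ,
      y ⬝ᵥ (P t *ᵥ y) ≥ (1 / M) * (y ⬝ᵥ y))
    (hDbd : ∀ t ∈ Set.Ioo (0:ℝ) T, ∀ y : Fin n → ℝ, y ⬝ᵥ y = 1 →
      |y ⬝ᵥ (D t *ᵥ y)| < M * R ^ 2)
    (hV : ∀ t ∈ Set.Ioo (0:ℝ) T, ∀ i j,
      HasDerivAt (fun s => V s i j) (V' t i j) t)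
    (hRic : ∀ t ∈ Set.Ioo (0:ℝ) T,
      V' t + (V t)ᵀ * P t * V t + D t = 0) :
    ∀ x : Fin n → ℝ, x ⬝ᵥ x = 1 → ∀ t ∈ Set.Ioo (1:ℝ) (T - 1),
      |x ⬝ᵥ (V t *ᵥ x)| ≤ M * R * (Real.cosh R / Real.sinh R) :=
  riccati_quadratic_form_bound_general n T M R hM hR P D V V' hPpos hDbd hV hRic
end

section
/- Let (H₁,V₁) be a matrix solution of the Jacobi system H' = AH + BV, V' = −CH − A*V (B, C symmetric) with det H₁(s) ≠ 0 for all s ∈ [t₀,t] and image(H₁,V₁) Lagrangian. Then every other matrix solution (H₂,V₂) has the form H₂(t) = H₁(t)[D + ∫_{t₀}^t H₁^{-1} B (H₁*)^{-1} K ds] and V₂ = (H₁*)^{-1}[K + V₁* H₂], where K and D are constant matrices; moreover image(H₂,V₂) is Lagrangian if and only if K*D is symmetric. -/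
/-!
For two solutions of the Jacobi system with `B` and `C` symmetric, the Wronskian
`H₁ᵀ V₂ - V₁ᵀ H₂` has zero derivative, so it is a constant `K`. Taken with both solutions equal
to `(H₂, V₂)`, this says that the symmetry of `V₂ᵀ H₂` is preserved along the flow. Solving
`H₁ᵀ V₂ - V₁ᵀ H₂ = K` for `V₂` gives the second formula. Since `V₁ᵀ H₁` is symmetric,
`V₁ H₁⁻¹ = (H₁ᵀ)⁻¹ V₁ᵀ`, and with this the derivative of `H₁⁻¹ H₂` collapses to
`H₁⁻¹ B (H₁ᵀ)⁻¹ K`; integrating from `t₀` gives the first formula with `D = H₁(t₀)⁻¹ H₂(t₀)`.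
Finally, at `t₀` one has `V₂ᵀ H₂ = Kᵀ D + Dᵀ (H₁ᵀ V₁) D` with `H₁ᵀ V₁` symmetric, so `(H₂, V₂)`
is Lagrangian iff `Kᵀ D` is symmetric.
-/

open Matrix Set
-- The operator norm makes square matrices a normed algebra, so products and inverses can be
-- differentiated; its topology is the entrywise one.
open scoped Matrix.Norms.Operator

namespace Matrix

section Algebra

variable {m R : Type*} [Fintype m] [CommRing R]

theorem dotProduct_mulVec_mulVec (V H : Matrix m m R) (x y : m → R) :
    (V *ᵥ x) ⬝ᵥ (H *ᵥ y) = x ⬝ᵥ ((Vᵀ * H) *ᵥ y) := by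
  rw [← vecMul_transpose, dotProduct_mulVec, vecMul_vecMul, dotProduct_mulVec]

theorem forall_dotProduct_mulVec_sub_eq_zero_iff [DecidableEq m] {H V : Matrix m m R} :
    (∀ x y : m → R, (V *ᵥ x) ⬝ᵥ (H *ᵥ y) - (V *ᵥ y) ⬝ᵥ (H *ᵥ x) = 0) ↔ (Vᵀ * H).IsSymm := by
  simp only [dotProduct_mulVec_mulVec, sub_eq_zero]
  constructor
  · intro h
    refine IsSymm.ext fun i j => ?_
    simpa using h (Pi.single j 1) (Pi.single i 1)
  · intro h x y
    rw [dotProduct_comm, ← vecMul_transpose, h.eq, dotProduct_mulVec]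

theorem mul_inv_eq_transpose_inv_mul_transpose [DecidableEq m] {H V : Matrix m m R}
    (hH : IsUnit H.det) (hVH : (Vᵀ * H).IsSymm) : V * H⁻¹ = (Hᵀ)⁻¹ * Vᵀ := by
  have hHT : IsUnit Hᵀ.det := by rwa [det_transpose]
  have hsymm : Hᵀ * V = Vᵀ * H := by
    simpa only [transpose_mul, transpose_transpose] using hVH.eq
  calc V * H⁻¹ = (Hᵀ)⁻¹ * (Hᵀ * V) * H⁻¹ := by rw [nonsing_inv_mul_cancel_left _ _ hHT]
    _ = (Hᵀ)⁻¹ * Vᵀ := by rw [hsymm, mul_assoc, mul_assoc, mul_nonsing_inv _ hH, mul_one]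

theorem isSymm_transpose_mul_iff_of_eq_mul {H₁ V₁ H₂ V₂ D : Matrix m m R}
    (hVH : (V₁ᵀ * H₁).IsSymm) (hH : H₂ = H₁ * D) :
    (V₂ᵀ * H₂).IsSymm ↔ ((H₁ᵀ * V₂ - V₁ᵀ * H₂)ᵀ * D).IsSymm := by
  have hsplit : V₂ᵀ * H₂ = (H₁ᵀ * V₂ - V₁ᵀ * H₂)ᵀ * D + Dᵀ * (H₁ᵀ * V₁) * D := by
    subst hH
    simp only [transpose_sub, transpose_mul, transpose_transpose]
    noncomm_ring
  have hconj : (Dᵀ * (H₁ᵀ * V₁) * D).IsSymm := by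
    have hHV : H₁ᵀ * V₁ = V₁ᵀ * H₁ := by
      simpa only [transpose_mul, transpose_transpose] using hVH.eq
    simp only [IsSymm, transpose_mul, transpose_transpose, mul_assoc]
    rw [← mul_assoc V₁ᵀ, ← hHV, mul_assoc]
  rw [hsplit]
  exact ⟨fun h => by simpa using h.sub hconj, fun h => h.add hconj⟩

end Algebra

section Calculus

variable {l m 𝕜 : Type*} [Fintype m] [NontriviallyNormedField 𝕜]

theorem hasDerivAt_iff_entries {H : 𝕜 → Matrix l m 𝕜} {H' : Matrix l m 𝕜} {t : 𝕜} :
    HasDerivAt H H' t ↔ ∀ i j, HasDerivAt (fun s => H s i j) (H' i j) t :=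
  (hasDerivAt_pi (φ := fun s i j => H s i j) (φ' := fun i j => H' i j)).trans
    (forall_congr' fun _ => hasDerivAt_pi)

theorem _root_.HasDerivAt.matrix_transpose [Fintype l] {H : 𝕜 → Matrix l m 𝕜}
    {H' : Matrix l m 𝕜} {t : 𝕜} (h : HasDerivAt H H' t) :
    HasDerivAt (fun s => (H s)ᵀ) H'ᵀ t :=
  hasDerivAt_iff_entries.2 fun i j => hasDerivAt_iff_entries.1 h j i

theorem eq_add_integral_of_hasDerivAt {Y F : ℝ → Matrix l m ℝ} {a b : ℝ} (hab : a ≤ b)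
    (hY : ∀ s ∈ Icc a b, HasDerivAt Y (F s) s) (hF : ContinuousOn F (Icc a b)) :
    Y b = Y a + of fun i j => ∫ s in a..b, F s i j := by
  ext i j
  rw [← uIcc_of_le hab] at hY hF
  have hFij : ContinuousOn (fun s => F s i j) (uIcc a b) :=
    (continuous_id.matrix_elem i j).comp_continuousOn hF
  rw [add_apply, of_apply, intervalIntegral.integral_eq_sub_of_hasDerivAt
    (fun s hs => hasDerivAt_iff_entries.1 (hY s hs) i j) hFij.intervalIntegrable]
  ring

end Calculus

theorem _root_.HasDerivAt.matrix_inv {m 𝕜 : Type*} [Fintype m] [DecidableEq m] [RCLike 𝕜]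
    {H : 𝕜 → Matrix m m 𝕜} {H' : Matrix m m 𝕜} {t : 𝕜} (h : HasDerivAt H H' t)
    (hH : IsUnit (H t).det) :
    HasDerivAt (fun s => (H s)⁻¹) (-((H t)⁻¹ * H' * (H t)⁻¹)) t := by
  obtain ⟨u, hu⟩ := (isUnit_iff_isUnit_det _).2 hH
  have hinv : HasFDerivAt Ring.inverse _ (H t) := hu ▸ hasFDerivAt_ringInverse (𝕜 := 𝕜) u
  have h' := hinv.comp_hasDerivAt t h
  simp only [Function.comp_def, ← nonsing_inv_eq_ringInverse] at h'
  refine h'.congr_deriv ?_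
  simp [coe_units_inv, hu, mul_assoc]

end Matrix

variable {m : Type*} [Fintype m]

def IsJacobiSolution (A B C H V : ℝ → Matrix m m ℝ) : Prop :=
  ∀ t, HasDerivAt H (A t * H t + B t * V t) t ∧ HasDerivAt V (-(C t * H t) - (A t)ᵀ * V t) t

namespace IsJacobiSolution

variable [DecidableEq m] {A B C H₁ V₁ H₂ V₂ : ℝ → Matrix m m ℝ}

theorem hasDerivAt_wronskian (h₁ : IsJacobiSolution A B C H₁ V₁)
    (h₂ : IsJacobiSolution A B C H₂ V₂) {t : ℝ} (hB : (B t).IsSymm) (hC : (C t).IsSymm) :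
    HasDerivAt (fun s => (H₁ s)ᵀ * V₂ s - (V₁ s)ᵀ * H₂ s) 0 t := by
  refine (((h₁ t).1.matrix_transpose.fun_mul (h₂ t).2).fun_sub
    ((h₁ t).2.matrix_transpose.fun_mul (h₂ t).1)).congr_deriv ?_
  simp only [transpose_add, transpose_sub, transpose_neg, transpose_mul, transpose_transpose,
    hB.eq, hC.eq]
  noncomm_ring

theorem wronskian_eq (h₁ : IsJacobiSolution A B C H₁ V₁) (h₂ : IsJacobiSolution A B C H₂ V₂)
    (hB : ∀ t, (B t).IsSymm) (hC : ∀ t, (C t).IsSymm) (s t : ℝ) :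
    (H₁ s)ᵀ * V₂ s - (V₁ s)ᵀ * H₂ s = (H₁ t)ᵀ * V₂ t - (V₁ t)ᵀ * H₂ t :=
  is_const_of_deriv_eq_zero
    (fun r => (h₁.hasDerivAt_wronskian h₂ (hB r) (hC r)).differentiableAt)
    (fun r => (h₁.hasDerivAt_wronskian h₂ (hB r) (hC r)).deriv) s t

theorem isSymm_transpose_mul_iff (h : IsJacobiSolution A B C H₁ V₁)
    (hB : ∀ t, (B t).IsSymm) (hC : ∀ t, (C t).IsSymm) (s t : ℝ) :
    ((V₁ s)ᵀ * H₁ s).IsSymm ↔ ((V₁ t)ᵀ * H₁ t).IsSymm := by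
  have hsymm (r : ℝ) : ((V₁ r)ᵀ * H₁ r).IsSymm ↔ (H₁ r)ᵀ * V₁ r - (V₁ r)ᵀ * H₁ r = 0 := by
    rw [IsSymm, transpose_mul, transpose_transpose, sub_eq_zero]
  rw [hsymm, hsymm, h.wronskian_eq h hB hC s t]

theorem hasDerivAt_inv_mul (h₁ : IsJacobiSolution A B C H₁ V₁)
    (h₂ : IsJacobiSolution A B C H₂ V₂) {t : ℝ} (hdet : IsUnit (H₁ t).det)
    (hLag : ((V₁ t)ᵀ * H₁ t).IsSymm) :
    HasDerivAt (fun s => (H₁ s)⁻¹ * H₂ s)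
      ((H₁ t)⁻¹ * B t * ((H₁ t)ᵀ)⁻¹ * ((H₁ t)ᵀ * V₂ t - (V₁ t)ᵀ * H₂ t)) t := by
  have hdetT : IsUnit (H₁ t)ᵀ.det := by rwa [det_transpose]
  have hcorr : ((H₁ t)ᵀ)⁻¹ * ((H₁ t)ᵀ * V₂ t - (V₁ t)ᵀ * H₂ t)
      = V₂ t - V₁ t * (H₁ t)⁻¹ * H₂ t := by
    rw [mul_inv_eq_transpose_inv_mul_transpose hdet hLag, mul_sub,
      nonsing_inv_mul_cancel_left _ _ hdetT, mul_assoc]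
  refine (((h₁ t).1.matrix_inv hdet).fun_mul (h₂ t).1).congr_deriv ?_
  calc _ = (H₁ t)⁻¹ * A t * (H₂ t - H₁ t * (H₁ t)⁻¹ * H₂ t)
        + (H₁ t)⁻¹ * B t * (V₂ t - V₁ t * (H₁ t)⁻¹ * H₂ t) := by noncomm_ring
    _ = _ := by
      rw [mul_nonsing_inv _ hdet, one_mul, sub_self, mul_zero, zero_add, ← hcorr]
      simp only [mul_assoc]

theorem eq_mul_add_integral (h₁ : IsJacobiSolution A B C H₁ V₁)
    (h₂ : IsJacobiSolution A B C H₂ V₂) (hB : Continuous B) {K : Matrix m m ℝ}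
    (hK : ∀ s, (H₁ s)ᵀ * V₂ s - (V₁ s)ᵀ * H₂ s = K) {t₀ t : ℝ} (hle : t₀ ≤ t)
    (hdet : ∀ s ∈ Icc t₀ t, IsUnit (H₁ s).det)
    (hLag : ∀ s ∈ Icc t₀ t, ((V₁ s)ᵀ * H₁ s).IsSymm) :
    H₂ t = H₁ t * ((H₁ t₀)⁻¹ * H₂ t₀ +
      of fun i j => ∫ s in t₀..t, ((H₁ s)⁻¹ * B s * ((H₁ s)ᵀ)⁻¹ * K) i j) := by
  have hY (s : ℝ) (hs : s ∈ Icc t₀ t) : HasDerivAt (fun r => (H₁ r)⁻¹ * H₂ r)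
      ((H₁ s)⁻¹ * B s * ((H₁ s)ᵀ)⁻¹ * K) s :=
    hK s ▸ h₁.hasDerivAt_inv_mul h₂ (hdet s hs) (hLag s hs)
  have hinv : ContinuousOn (fun s => (H₁ s)⁻¹) (Icc t₀ t) := fun s hs =>
    ((h₁ s).1.matrix_inv (hdet s hs)).continuousAt.continuousWithinAt
  have hinvT : ContinuousOn (fun s => ((H₁ s)ᵀ)⁻¹) (Icc t₀ t) := fun s hs =>
    ((h₁ s).1.matrix_transpose.matrix_inv (by rw [det_transpose]; exact hdet s hs)
      ).continuousAt.continuousWithinAt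
  have hcont := ((hinv.mul hB.continuousOn).mul hinvT).mul (continuousOn_const (c := K))
  rw [← eq_add_integral_of_hasDerivAt hle hY hcont,
    mul_nonsing_inv_cancel_left _ _ (hdet t ⟨hle, le_rfl⟩)]

end IsJacobiSolution

/-- Lemma (general solution of the Jacobi equation):  if `(H₁,V₁)` is a matrix
solution of `H' = A H + B V`, `V' = -C H - Aᵀ V` with `det H₁ ≠ 0` on `[t₀,t₁]`
and Lagrangian image (`V₁ᵀ H₁` symmetric), then any other matrix solution
`(H₂,V₂)` is of the form
`H₂ = H₁ (D + ∫_{t₀}^t H₁⁻¹ B (H₁ᵀ)⁻¹ K ds)`, `V₂ = (H₁ᵀ)⁻¹ (K + V₁ᵀ H₂)`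
for constant matrices `K`, `D`; moreover the image of `(H₂,V₂)` is Lagrangian
iff `Kᵀ D` is symmetric. -/
theorem jacobi_general_solution
    (n : ℕ) (A B C : ℝ → Matrix (Fin n) (Fin n) ℝ)
    (hBcont : ∀ i j, Continuous fun t => B t i j)
    (hBsymm : ∀ t, (B t)ᵀ = B t) (hCsymm : ∀ t, (C t)ᵀ = C t)
    (H₁ V₁ H₂ V₂ : ℝ → Matrix (Fin n) (Fin n) ℝ)
    (hH₁ : ∀ t, ∀ i j, HasDerivAt (fun s => H₁ s i j)
      ((A t * H₁ t + B t * V₁ t) i j) t)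
    (hV₁ : ∀ t, ∀ i j, HasDerivAt (fun s => V₁ s i j)
      ((-(C t * H₁ t) - (A t)ᵀ * V₁ t) i j) t)
    (hH₂ : ∀ t, ∀ i j, HasDerivAt (fun s => H₂ s i j)
      ((A t * H₂ t + B t * V₂ t) i j) t)
    (hV₂ : ∀ t, ∀ i j, HasDerivAt (fun s => V₂ s i j)
      ((-(C t * H₂ t) - (A t)ᵀ * V₂ t) i j) t)
    (t₀ t₁ : ℝ) (ht : t₀ < t₁)
    (hdet : ∀ s ∈ Set.Icc t₀ t₁, (H₁ s).det ≠ 0)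
    (hLag₁ : ∀ s ∈ Set.Icc t₀ t₁, ((V₁ s)ᵀ * H₁ s)ᵀ = (V₁ s)ᵀ * H₁ s) :
    ∃ K D : Matrix (Fin n) (Fin n) ℝ,
      (∀ t ∈ Set.Icc t₀ t₁,
        H₂ t = H₁ t *
          (D + Matrix.of fun i j =>
            ∫ s in t₀..t, ((H₁ s)⁻¹ * B s * ((H₁ s)ᵀ)⁻¹ * K) i j) ∧
        V₂ t = ((H₁ t)ᵀ)⁻¹ * (K + (V₁ t)ᵀ * H₂ t)) ∧
      ((∀ t ∈ Set.Icc t₀ t₁, ∀ x y : Fin n → ℝ,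
          (V₂ t *ᵥ x) ⬝ᵥ (H₂ t *ᵥ y) - (V₂ t *ᵥ y) ⬝ᵥ (H₂ t *ᵥ x) = 0)
        ↔ (Kᵀ * D)ᵀ = Kᵀ * D) := by
  have h₁ : IsJacobiSolution A B C H₁ V₁ := fun t =>
    ⟨hasDerivAt_iff_entries.2 (hH₁ t), hasDerivAt_iff_entries.2 (hV₁ t)⟩
  have h₂ : IsJacobiSolution A B C H₂ V₂ := fun t =>
    ⟨hasDerivAt_iff_entries.2 (hH₂ t), hasDerivAt_iff_entries.2 (hV₂ t)⟩
  have hunit (s : ℝ) (hs : s ∈ Icc t₀ t₁) : IsUnit (H₁ s).det := (hdet s hs).isUnit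
  have ht₀ : t₀ ∈ Icc t₀ t₁ := left_mem_Icc.2 ht.le
  set K := (H₁ t₀)ᵀ * V₂ t₀ - (V₁ t₀)ᵀ * H₂ t₀
  have hK (s : ℝ) : (H₁ s)ᵀ * V₂ s - (V₁ s)ᵀ * H₂ s = K := h₁.wronskian_eq h₂ hBsymm hCsymm s t₀
  refine ⟨K, (H₁ t₀)⁻¹ * H₂ t₀, fun t hmem => ⟨?_, ?_⟩, ?_⟩
  · have hsub : Icc t₀ t ⊆ Icc t₀ t₁ := Icc_subset_Icc_right hmem.2
    exact h₁.eq_mul_add_integral h₂ (continuous_matrix hBcont) hK hmem.1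
      (fun s hs => hunit s (hsub hs)) (fun s hs => hLag₁ s (hsub hs))
  · have hdetT : IsUnit (H₁ t)ᵀ.det := by rw [det_transpose]; exact hunit t hmem
    rw [← hK t, sub_add_cancel, nonsing_inv_mul_cancel_left _ _ hdetT]
  · simp only [forall_dotProduct_mulVec_sub_eq_zero_iff]
    have hLag₀ := isSymm_transpose_mul_iff_of_eq_mul (V₂ := V₂ t₀) (hLag₁ t₀ ht₀)
      (mul_nonsing_inv_cancel_left _ (H₂ t₀) (hunit t₀ ht₀)).symm
    exact ⟨fun h => hLag₀.1 (h t₀ ht₀),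
      fun h t _ => (h₂.isSymm_transpose_mul_iff hBsymm hCsymm t t₀).2 (hLag₀.2 h)⟩
end

section
/- Let Ψ : ℝ → Isom(𝐄) be a continuous linear cocycle (ℝ-action by bundle isomorphisms over a flow ψ on a compact metric space 𝐁) which is quasi-hyperbolic, i.e. sup_{t∈ℝ} |Ψ_t(ξ)| = +∞ for every nonzero ξ ∈ 𝐄. Then there exists τ > 0 such that for all b ∈ 𝐁: ‖Ψ_τ|_{E^s(b)}‖ < 1/2 and ‖Ψ_{−τ}|_{E^u(b)}‖ < 1/2, where E^s(b) = {ξ : sup_{t>0}|Ψ_t ξ| < ∞} and E^u(b) = {ξ : sup_{t>0}|Ψ_{−t} ξ| < ∞}. -/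
open Filter Topology

/-- A continuous linear cocycle (`ℝ`-action by bundle isomorphisms on the
trivial vector bundle `B × E`) over a continuous flow on `B`. -/
structure LinearCocycle (B E : Type*) [TopologicalSpace B]
    [NormedAddCommGroup E] [NormedSpace ℝ E] where
  flow : ℝ → B → B
  flow_cont : Continuous fun p : ℝ × B => flow p.1 p.2
  flow_zero : ∀ b, flow 0 b = b
  flow_add : ∀ s t b, flow s (flow t b) = flow (s + t) b
  P : ℝ → B → E →L[ℝ] E
  P_cont : Continuous fun p : ℝ × B => P p.1 p.2
  P_zero : ∀ b, P 0 b = ContinuousLinearMap.id ℝ E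
  P_comp : ∀ s t b, (P s (flow t b)).comp (P t b) = P (s + t) b

variable {B E : Type*} [TopologicalSpace B]
  [NormedAddCommGroup E] [NormedSpace ℝ E]

/-- Quasi-hyperbolicity: every nonzero vector has unbounded orbit. -/
def LinearCocycle.IsQuasiHyperbolic (Φ : LinearCocycle B E) : Prop :=
  ∀ b : B, ∀ v : E, v ≠ 0 → ∀ C : ℝ, ∃ t : ℝ, C < ‖Φ.P t b v‖

/-- The subspace of vectors with bounded forward orbit. -/
def LinearCocycle.stable (Φ : LinearCocycle B E) (b : B) : Submodule ℝ E where
  carrier := {v | ∃ C : ℝ, ∀ t > (0:ℝ), ‖Φ.P t b v‖ ≤ C}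
  add_mem' := by
    rintro u v ⟨C₁, h₁⟩ ⟨C₂, h₂⟩
    exact ⟨C₁ + C₂, fun t ht => by
      simpa [map_add] using (norm_add_le (Φ.P t b u) (Φ.P t b v)).trans
        (add_le_add (h₁ t ht) (h₂ t ht))⟩
  zero_mem' := ⟨0, fun t ht => by simp⟩
  smul_mem' := by
    rintro c v ⟨C, h⟩
    exact ⟨‖c‖ * C, fun t ht => by
      rw [map_smul, norm_smul]
      exact mul_le_mul_of_nonneg_left (h t ht) (norm_nonneg c)⟩

/-- The subspace of vectors with bounded backward orbit. -/
def LinearCocycle.unstable (Φ : LinearCocycle B E) (b : B) : Submodule ℝ E where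
  carrier := {v | ∃ C : ℝ, ∀ t > (0:ℝ), ‖Φ.P (-t) b v‖ ≤ C}
  add_mem' := by
    rintro u v ⟨C₁, h₁⟩ ⟨C₂, h₂⟩
    exact ⟨C₁ + C₂, fun t ht => by
      simpa [map_add] using (norm_add_le (Φ.P (-t) b u) (Φ.P (-t) b v)).trans
        (add_le_add (h₁ t ht) (h₂ t ht))⟩
  zero_mem' := ⟨0, fun t ht => by simp⟩
  smul_mem' := by
    rintro c v ⟨C, h⟩
    exact ⟨‖c‖ * C, fun t ht => by
      rw [map_smul, norm_smul]
      exact mul_le_mul_of_nonneg_left (h t ht) (norm_nonneg c)⟩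

/-- Uniform hyperbolicity of a linear cocycle over an invariant subset `Λ`. -/
def LinearCocycle.IsHyperbolicOn (Φ : LinearCocycle B E) (Λ : Set B) : Prop :=
  ∃ Es Eu : B → Submodule ℝ E,
    (∀ t : ℝ, ∀ b ∈ Λ, (Es b).map (Φ.P t b : E →ₗ[ℝ] E) = Es (Φ.flow t b)) ∧
    (∀ t : ℝ, ∀ b ∈ Λ, (Eu b).map (Φ.P t b : E →ₗ[ℝ] E) = Eu (Φ.flow t b)) ∧
    (∀ b ∈ Λ, IsCompl (Es b) (Eu b)) ∧
    ∃ T > (0:ℝ), ∀ b ∈ Λ,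
      (∀ v ∈ Es b, v ≠ 0 → ‖Φ.P T b v‖ < (1/2) * ‖v‖) ∧
      (∀ v ∈ Eu b, v ≠ 0 → ‖Φ.P (-T) b v‖ < (1/2) * ‖v‖)

/-! Over a compact base quasi-hyperbolicity is uniform: by compactness of `B × S(E)`, for every `K`
there is a time `T` such that each nonzero vector `w` over each base point satisfies
`‖Ψ_r w‖ > K ‖w‖` for some `r ≥ -T`. Taking `K = 2` at a time where a stable orbit exceeds half
its supremum bounds stable orbits by `C ‖v‖` uniformly; taking `K = C / ε` at a time `t ≥ T` at
which a stable vector is not yet `ε`-contracted contradicts that bound. Reversing time turns the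
unstable bundle into the stable one. -/

open Set Metric

lemma exists_forall_lt_two_mul_of_bddAbove {α : Type*} {s : Set α} {f : α → ℝ}
    (hf : BddAbove (f '' s)) {a : α} (ha : a ∈ s) (hfa : 0 < f a) :
    ∃ x ∈ s, ∀ y ∈ s, f y < 2 * f x := by
  have hS : 0 < sSup (f '' s) := hfa.trans_le (le_csSup hf ⟨a, ha, rfl⟩)
  obtain ⟨_, ⟨x, hx, rfl⟩, hlt⟩ :=
    exists_lt_of_lt_csSup ⟨_, mem_image_of_mem f ha⟩ (half_lt_self_iff.2 hS)
  exact ⟨x, hx, fun y hy => by linarith [le_csSup hf ⟨y, hy, rfl⟩]⟩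

namespace LinearCocycle

variable (Φ : LinearCocycle B E)

lemma P_apply_P (s t : ℝ) (b : B) (v : E) :
    Φ.P s (Φ.flow t b) (Φ.P t b v) = Φ.P (s + t) b v := by
  rw [← ContinuousLinearMap.comp_apply, Φ.P_comp]

@[simp]
lemma P_zero_apply (b : B) (v : E) : Φ.P 0 b v = v := by
  simp [Φ.P_zero]

lemma continuous_P_apply (r : ℝ) : Continuous fun p : B × E => Φ.P r p.1 p.2 :=
  (Φ.P_cont.comp (continuous_const.prodMk continuous_fst)).clm_apply continuous_snd

lemma exists_norm_P_le [CompactSpace B] (T : ℝ) :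
    ∃ M, 0 ≤ M ∧ ∀ t ∈ Icc 0 T, ∀ b, ‖Φ.P t b‖ ≤ M := by
  obtain ⟨M, hM⟩ := ((isCompact_Icc (a := 0) (b := T)).prod
    isCompact_univ).exists_bound_of_continuousOn Φ.P_cont.continuousOn
  exact ⟨max M 0, le_max_right _ _,
    fun t ht b => (hM (t, b) ⟨ht, mem_univ b⟩).trans (le_max_left _ _)⟩

lemma bddAbove_norm_P_of_mem_stable {b : B} {v : E} (hv : v ∈ Φ.stable b) :
    BddAbove ((fun t => ‖Φ.P t b v‖) '' Ici 0) := by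
  obtain ⟨C, hC⟩ := hv
  refine ⟨max C ‖v‖, ?_⟩
  rintro _ ⟨t, ht, rfl⟩
  rcases (mem_Ici.1 ht).eq_or_lt with rfl | ht
  · simp
  · exact (hC t ht).trans (le_max_left _ _)

def reverse : LinearCocycle B E where
  flow t b := Φ.flow (-t) b
  flow_cont := Φ.flow_cont.comp ((continuous_neg.comp continuous_fst).prodMk continuous_snd)
  flow_zero b := by simpa using Φ.flow_zero b
  flow_add s t b := by rw [Φ.flow_add, neg_add]
  P t b := Φ.P (-t) b
  P_cont := Φ.P_cont.comp ((continuous_neg.comp continuous_fst).prodMk continuous_snd)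
  P_zero b := by simpa using Φ.P_zero b
  P_comp s t b := by rw [Φ.P_comp, neg_add]

lemma stable_reverse (b : B) : Φ.reverse.stable b = Φ.unstable b := rfl

variable {Φ}

lemma IsQuasiHyperbolic.reverse (hqh : Φ.IsQuasiHyperbolic) : Φ.reverse.IsQuasiHyperbolic :=
  fun b v hv C => let ⟨t, ht⟩ := hqh b v hv C; ⟨-t, by simpa [LinearCocycle.reverse] using ht⟩

section Compact

variable [CompactSpace B] [FiniteDimensional ℝ E]

lemma IsQuasiHyperbolic.exists_unit_escape (hqh : Φ.IsQuasiHyperbolic) (K : ℝ) :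
    ∃ T, ∀ c u, ‖u‖ = 1 → ∃ r, -T ≤ r ∧ K < ‖Φ.P r c u‖ := by
  let bounded (T : ℝ) : Set (B × E) := ⋂ r ∈ Ici (-T), {p | ‖Φ.P r p.1 p.2‖ ≤ K}
  have closed (T : ℝ) : IsClosed (bounded T) :=
    isClosed_biInter fun r _ => isClosed_le (Φ.continuous_P_apply r).norm continuous_const
  have directed : Directed (· ⊇ ·) bounded := Antitone.directed_ge fun T T' hT =>
    biInter_subset_biInter_left (Ici_subset_Ici.2 (neg_le_neg hT))
  have empty : (univ ×ˢ sphere (0 : E) 1) ∩ ⋂ T, bounded T = ∅ := by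
    refine eq_empty_of_forall_notMem ?_
    rintro ⟨b, v⟩ ⟨⟨-, hv⟩, hbdd⟩
    obtain ⟨r, hr⟩ := hqh b v (ne_zero_of_mem_unit_sphere ⟨v, hv⟩) K
    exact hr.not_ge (mem_iInter₂.1 (mem_iInter.1 hbdd (-r)) r (by simp))
  obtain ⟨T, hT⟩ := (isCompact_univ.prod (isCompact_sphere (0 : E) 1)).elim_directed_family_closed
    bounded closed empty directed
  refine ⟨T, fun c u hu => ?_⟩
  by_contra! h
  exact eq_empty_iff_forall_notMem.1 hT (c, u)
    ⟨⟨mem_univ c, by simpa using hu⟩, mem_iInter₂.2 h⟩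

lemma IsQuasiHyperbolic.exists_escape (hqh : Φ.IsQuasiHyperbolic) (K : ℝ) :
    ∃ T, ∀ c w, w ≠ 0 → ∃ r, -T ≤ r ∧ K * ‖w‖ < ‖Φ.P r c w‖ := by
  obtain ⟨T, hT⟩ := hqh.exists_unit_escape K
  refine ⟨T, fun c w hw => ?_⟩
  have hw : 0 < ‖w‖ := norm_pos_iff.2 hw
  obtain ⟨r, hr, hK⟩ := hT c (‖w‖⁻¹ • w) (by simp [norm_smul, hw.ne'])
  rw [map_smul, norm_smul, norm_inv, norm_norm, lt_inv_mul_iff₀ hw] at hK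
  exact ⟨r, hr, by rwa [mul_comm]⟩

lemma IsQuasiHyperbolic.exists_norm_P_stable_le (hqh : Φ.IsQuasiHyperbolic) :
    ∃ C, 0 ≤ C ∧ ∀ b, ∀ v ∈ Φ.stable b, ∀ t, 0 ≤ t → ‖Φ.P t b v‖ ≤ C * ‖v‖ := by
  obtain ⟨T, hT⟩ := hqh.exists_escape 2
  obtain ⟨M, hM0, hM⟩ := Φ.exists_norm_P_le T
  refine ⟨2 * M, by positivity, fun b v hv t ht => ?_⟩
  rcases eq_or_ne v 0 with rfl | hv0
  · simp
  obtain ⟨s, hs, hmax⟩ := exists_forall_lt_two_mul_of_bddAbove (f := fun t => ‖Φ.P t b v‖)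
    (Φ.bddAbove_norm_P_of_mem_stable hv) self_mem_Ici (by simpa using hv0)
  have hw : Φ.P s b v ≠ 0 := fun h => (hmax 0 self_mem_Ici).not_ge (by simp [h])
  -- the orbit of `Ψ_s v` stays below twice its norm at all times `r ≥ -s`, so `s < T`
  have hsT : s < T := by
    by_contra! hTs
    obtain ⟨r, hr, hgrow⟩ := hT (Φ.flow s b) (Φ.P s b v) hw
    rw [P_apply_P] at hgrow
    exact hgrow.not_gt (hmax (r + s) (by rw [mem_Ici]; linarith))
  calc ‖Φ.P t b v‖ ≤ 2 * ‖Φ.P s b v‖ := (hmax t ht).le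
    _ ≤ 2 * (M * ‖v‖) := by
      gcongr
      exact (Φ.P s b).le_opNorm v |>.trans (by gcongr; exact hM s ⟨hs, hsT.le⟩ b)
    _ = 2 * M * ‖v‖ := by ring

lemma IsQuasiHyperbolic.eventually_norm_P_stable_le (hqh : Φ.IsQuasiHyperbolic) {ε : ℝ}
    (hε : 0 < ε) : ∀ᶠ t in atTop, ∀ b, ∀ v ∈ Φ.stable b, ‖Φ.P t b v‖ ≤ ε * ‖v‖ := by
  obtain ⟨C, hC0, hC⟩ := hqh.exists_norm_P_stable_le
  obtain ⟨T, hT⟩ := hqh.exists_escape (C / ε)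
  filter_upwards [eventually_ge_atTop T] with t ht b v hv
  by_contra! hlt
  -- otherwise `Ψ_t v` would grow by a factor `C / ε` after time `-t`, beyond the bound `C ‖v‖`
  have hw : Φ.P t b v ≠ 0 := fun h => by
    rw [h, norm_zero] at hlt
    exact hlt.not_ge (by positivity)
  obtain ⟨r, hr, hgrow⟩ := hT (Φ.flow t b) (Φ.P t b v) hw
  rw [P_apply_P] at hgrow
  have hbound := hC b v hv (r + t) (by linarith)
  have : C * ‖v‖ ≤ C / ε * ‖Φ.P t b v‖ := calc
    C * ‖v‖ = C / ε * (ε * ‖v‖) := by field_simp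
    _ ≤ C / ε * ‖Φ.P t b v‖ := by gcongr
  linarith

end Compact

end LinearCocycle

/-- For a quasi-hyperbolic continuous linear cocycle over a compact base there
is `τ > 0` such that `‖Ψ_τ|_{E^s(b)}‖ < 1/2` and `‖Ψ_{-τ}|_{E^u(b)}‖ < 1/2`
for every `b`. -/
theorem quasi_hyperbolic_uniform_contraction
    [CompactSpace B] [FiniteDimensional ℝ E]
    (Φ : LinearCocycle B E) (hqh : Φ.IsQuasiHyperbolic) :
    ∃ τ > (0:ℝ), ∀ b : B,
      (∀ v ∈ Φ.stable b, v ≠ 0 → ‖Φ.P τ b v‖ < (1/2) * ‖v‖) ∧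
      (∀ v ∈ Φ.unstable b, v ≠ 0 → ‖Φ.P (-τ) b v‖ < (1/2) * ‖v‖) := by
  have quarter : (0 : ℝ) < 1 / 4 := by norm_num
  obtain ⟨τ, hτ, hs, hu⟩ := ((eventually_gt_atTop 0).and
    ((hqh.eventually_norm_P_stable_le quarter).and
      (hqh.reverse.eventually_norm_P_stable_le quarter))).exists
  refine ⟨τ, hτ, fun b => ⟨fun v hv hv0 => ?_, fun v hv hv0 => ?_⟩⟩
  · have hs := hs b v hv
    linarith [norm_pos_iff.2 hv0]
  · have hu : ‖Φ.P (-τ) b v‖ ≤ 1 / 4 * ‖v‖ := hu b v (Φ.stable_reverse b ▸ hv)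
    linarith [norm_pos_iff.2 hv0]
end

section
/- For a quasi-hyperbolic continuous linear cocycle Ψ over a compact base there exists K > 0 such that for all x ∈ 𝐁, v ∈ 𝐄(x) and all 0 ≤ t ≤ s: |Ψ_t(v)| ≤ K(|v| + |Ψ_s(v)|). -/
open Filter Topology

variable {B E : Type*} [TopologicalSpace B]
  [NormedAddCommGroup E] [NormedSpace ℝ E]

lemma LinearCocycle.apply_comp (Φ : LinearCocycle B E) (s t : ℝ) (x : B) (v : E) :
    Φ.P s (Φ.flow t x) (Φ.P t x v) = Φ.P (s + t) x v := by
  have := congrArg (fun L : E →L[ℝ] E => L v) (Φ.P_comp s t x)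
  simpa using this

lemma LinearCocycle.apply_inv (Φ : LinearCocycle B E) (t : ℝ) (x : B) (v : E) :
    Φ.P (-t) (Φ.flow t x) (Φ.P t x v) = v := by
  rw [Φ.apply_comp, neg_add_cancel, Φ.P_zero]
  rfl

lemma LinearCocycle.eval_cont (Φ : LinearCocycle B E) (τ : ℝ) :
    Continuous fun p : B × E => Φ.P τ p.1 p.2 := by
  have h1 : Continuous fun p : B × E => Φ.P τ p.1 :=
    Φ.P_cont.comp (continuous_const.prodMk continuous_fst)
  exact isBoundedBilinearMap_apply.continuous.comp (h1.prodMk continuous_snd)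

/-- For a quasi-hyperbolic continuous linear cocycle over a compact base there
is `K > 0` with `|Ψ_t(v)| ≤ K (|v| + |Ψ_s(v)|)` whenever `0 ≤ t ≤ s`. -/
theorem quasi_hyperbolic_intermediate_bound
    [CompactSpace B] [FiniteDimensional ℝ E]
    (Φ : LinearCocycle B E) (hqh : Φ.IsQuasiHyperbolic) :
    ∃ K > (0:ℝ), ∀ (x : B) (v : E) (t s : ℝ), 0 ≤ t → t ≤ s →
      ‖Φ.P t x v‖ ≤ K * (‖v‖ + ‖Φ.P s x v‖) := by
  by_contra hcon
  push_neg at hcon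
  -- hcon : ∀ K > 0, ∃ x v t s, 0 ≤ t ∧ t ≤ s ∧ K * (‖v‖ + ‖Φ.P s x v‖) < ‖Φ.P t x v‖
  set A : ℕ → Set (B × E) := fun n =>
    {p : B × E | ‖p.2‖ = 1 ∧ ∀ τ ∈ Set.Icc (-(n:ℝ)) (n:ℝ), ‖Φ.P τ p.1 p.2‖ ≤ 1}
    with hA
  have hA_sub : ∀ n, A (n+1) ⊆ A n := by
    rintro n p ⟨h1, h2⟩
    refine ⟨h1, fun τ hτ => h2 τ ⟨?_, ?_⟩⟩
    · push_cast
      linarith [hτ.1]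
    · push_cast
      linarith [hτ.2]
  have hA_closed : ∀ n, IsClosed (A n) := by
    intro n
    have : A n = {p : B × E | ‖p.2‖ = 1} ∩
        ⋂ τ ∈ Set.Icc (-(n:ℝ)) (n:ℝ), {p : B × E | ‖Φ.P τ p.1 p.2‖ ≤ 1} := by
      ext p
      simp [hA, Set.mem_iInter]
    rw [this]
    refine IsClosed.inter (isClosed_eq continuous_snd.norm continuous_const) ?_
    exact isClosed_biInter fun τ _ => isClosed_le (Φ.eval_cont τ).norm continuous_const
  -- uniform bounds on compact time intervals
  have hM : ∀ n : ℕ, ∃ M : ℝ, 0 ≤ M ∧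
      ∀ τ ∈ Set.Icc (-(n:ℝ)) (n:ℝ), ∀ b : B, ‖Φ.P τ b‖ ≤ M := by
    intro n
    have hc : IsCompact ((fun p : ℝ × B => ‖Φ.P p.1 p.2‖) ''
        (Set.Icc (-(n:ℝ)) (n:ℝ) ×ˢ Set.univ)) :=
      (isCompact_Icc.prod isCompact_univ).image Φ.P_cont.norm
    obtain ⟨M, hMb⟩ := hc.bddAbove
    refine ⟨max M 0, le_max_right _ _, fun τ hτ b => ?_⟩
    exact le_trans (hMb ⟨(τ, b), ⟨hτ, trivial⟩, rfl⟩) (le_max_left _ _)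
  have hA_ne : ∀ n : ℕ, (A n).Nonempty := by
    intro n
    obtain ⟨M, hM0, hMle⟩ := hM n
    obtain ⟨x, v, t, s, ht0, hts, hlt⟩ := hcon (M + 1) (by linarith)
    have hv : v ≠ 0 := by
      rintro rfl
      simp only [map_zero, norm_zero, add_zero, mul_zero] at hlt
      exact lt_irrefl 0 hlt
    have hvpos : 0 < ‖v‖ := norm_pos_iff.mpr hv
    -- choose the intermediate time maximizing the norm
    have hgcont : Continuous fun τ : ℝ => ‖Φ.P τ x v‖ := by
      have h1 : Continuous fun τ : ℝ => Φ.P τ x :=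
        Φ.P_cont.comp (continuous_id.prodMk continuous_const)
      exact (isBoundedBilinearMap_apply.continuous.comp
        (h1.prodMk continuous_const)).norm
    obtain ⟨t', ht'mem, ht'max⟩ := isCompact_Icc.exists_isMaxOn
      ⟨t, ht0, hts⟩ hgcont.continuousOn
    set y := Φ.flow t' x with hy
    set N := ‖Φ.P t' x v‖ with hN
    have hNt : ‖Φ.P t x v‖ ≤ N := ht'max ⟨ht0, hts⟩
    have hNpos : 0 < N := by
      have : (0:ℝ) < (M+1) * (‖v‖ + ‖Φ.P s x v‖) := by
        have := norm_nonneg (Φ.P s x v); nlinarith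
      linarith
    set w := N⁻¹ • Φ.P t' x v with hw
    have hwnorm : ‖w‖ = 1 := by
      rw [hw, norm_smul, norm_inv, Real.norm_eq_abs, abs_of_pos hNpos, ← hN]
      field_simp
    have key : ∀ τ : ℝ, 0 ≤ τ + t' → τ + t' ≤ s → ‖Φ.P τ y w‖ ≤ 1 := by
      intro τ h1 h2
      have heq : Φ.P τ y w = N⁻¹ • Φ.P (τ + t') x v := by
        rw [hw, map_smul, hy, Φ.apply_comp]
      rw [heq, norm_smul, norm_inv, Real.norm_eq_abs, abs_of_pos hNpos]
      have hle : ‖Φ.P (τ + t') x v‖ ≤ N := ht'max ⟨h1, h2⟩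
      rw [inv_mul_le_iff₀ hNpos, mul_one]
      exact hle
    -- t' > n
    have hMlt : M + 1 < ‖Φ.P t' x‖ := by
      have h2 : N ≤ ‖Φ.P t' x‖ * ‖v‖ := (Φ.P t' x).le_opNorm v
      have h3 : (M+1) * ‖v‖ < N := by
        have := norm_nonneg (Φ.P s x v); nlinarith
      nlinarith
    have htn : (n:ℝ) < t' := by
      by_contra h
      push_neg at h
      have h1 : ‖Φ.P t' x‖ ≤ M := hMle t' ⟨by linarith [ht'mem.1], h⟩ x
      linarith
    -- s - t' > n
    have hPsv : Φ.P s x v ≠ 0 := by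
      intro h0
      apply hv
      have := Φ.apply_inv s x v
      rw [h0, map_zero] at this
      exact this.symm
    have hPsvpos : 0 < ‖Φ.P s x v‖ := norm_pos_iff.mpr hPsv
    have hMlt2 : M + 1 < ‖Φ.P (-(s - t')) (Φ.flow (s - t') y)‖ := by
      have heq : Φ.P (s - t') y (Φ.P t' x v) = Φ.P s x v := by
        rw [hy, Φ.apply_comp, sub_add_cancel]
      have heq2 : Φ.P (-(s - t')) (Φ.flow (s - t') y) (Φ.P s x v) = Φ.P t' x v := by
        rw [← heq, Φ.apply_inv]
      have h2 : N ≤ ‖Φ.P (-(s - t')) (Φ.flow (s - t') y)‖ * ‖Φ.P s x v‖ := by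
        rw [hN, ← heq2]
        exact ContinuousLinearMap.le_opNorm _ _
      have h3 : (M+1) * ‖Φ.P s x v‖ < N := by nlinarith
      nlinarith
    have hun : (n:ℝ) < s - t' := by
      by_contra h
      push_neg at h
      have hu0 : 0 ≤ s - t' := by linarith [ht'mem.2]
      have h1 : ‖Φ.P (-(s - t')) (Φ.flow (s - t') y)‖ ≤ M :=
        hMle (-(s - t')) ⟨by linarith, by linarith⟩ _
      linarith
    refine ⟨(y, w), hwnorm, fun τ hτ => ?_⟩
    exact key τ (by linarith [hτ.1]) (by linarith [hτ.2])
  -- extract a point in the intersection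
  have hA0_compact : IsCompact (A 0) := by
    have hsub : A 0 ⊆ Set.univ ×ˢ Metric.sphere (0:E) 1 := by
      rintro ⟨b, w⟩ ⟨h1, _⟩
      exact ⟨trivial, by simpa [Metric.mem_sphere] using h1⟩
    exact (isCompact_univ.prod (isCompact_sphere 0 1)).of_isClosed_subset
      (hA_closed 0) hsub
  obtain ⟨⟨y, w⟩, hyw⟩ := IsCompact.nonempty_iInter_of_sequence_nonempty_isCompact_isClosed
    A hA_sub hA_ne hA0_compact hA_closed
  simp only [Set.mem_iInter] at hyw
  have hw1 : ‖w‖ = 1 := (hyw 0).1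
  have hwne : w ≠ 0 := by
    intro h; rw [h, norm_zero] at hw1; exact zero_ne_one hw1
  obtain ⟨τ, hτ⟩ := hqh y w hwne 1
  obtain ⟨n, hn⟩ := exists_nat_ge |τ|
  have hb : ‖Φ.P τ y w‖ ≤ 1 := by
    refine (hyw n).2 τ ⟨?_, ?_⟩
    · linarith [neg_abs_le τ]
    · linarith [le_abs_self τ]
  linarith
end

section
/- For a quasi-hyperbolic continuous linear cocycle Ψ over a compact base, there exist A > 0 and a > 0 such that |Ψ_t(v)| ≤ A e^{−at}|v| for all v ∈ E^s and t ≥ 0, and |Ψ_{−t}(v)| ≤ A e^{−at}|v| for all v ∈ E^u and t ≥ 0. -/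
open Filter Topology

variable {B E : Type*} [TopologicalSpace B]
  [NormedAddCommGroup E] [NormedSpace ℝ E]

namespace LinearCocycle

lemma apply_comp_s13 (Φ : LinearCocycle B E) (s t : ℝ) (b : B) (v : E) :
    Φ.P s (Φ.flow t b) (Φ.P t b v) = Φ.P (s + t) b v := by
  have h := Φ.P_comp s t b
  calc Φ.P s (Φ.flow t b) (Φ.P t b v)
      = ((Φ.P s (Φ.flow t b)).comp (Φ.P t b)) v := rfl
    _ = Φ.P (s + t) b v := by rw [h]

lemma stable_inv (Φ : LinearCocycle B E) {x : B} {v : E} (hv : v ∈ Φ.stable x)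
    {t : ℝ} (ht : 0 ≤ t) : Φ.P t x v ∈ Φ.stable (Φ.flow t x) := by
  obtain ⟨C, hC⟩ := hv
  refine ⟨C, fun s hs => ?_⟩
  rw [Φ.apply_comp_s13]
  exact hC (s + t) (by linarith)

lemma exists_opNorm_bound (Φ : LinearCocycle B E) [CompactSpace B] (S : ℝ) :
    ∃ K : ℝ, 1 ≤ K ∧ ∀ s ∈ Set.Icc (0:ℝ) S, ∀ x : B, ‖Φ.P s x‖ ≤ K := by
  have hc : IsCompact ((Set.Icc (0:ℝ) S) ×ˢ (Set.univ : Set B)) :=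
    isCompact_Icc.prod isCompact_univ
  have hcont : Continuous fun p : ℝ × B => ‖Φ.P p.1 p.2‖ := Φ.P_cont.norm
  obtain ⟨K, hK⟩ := (hc.image hcont).bddAbove
  refine ⟨max K 1, le_max_right _ _, fun s hs x => ?_⟩
  have hmem : ‖Φ.P s x‖ ∈ (fun p : ℝ × B => ‖Φ.P p.1 p.2‖) ''
      ((Set.Icc (0:ℝ) S) ×ˢ (Set.univ : Set B)) := by
    exact ⟨(s, x), Set.mk_mem_prod hs (Set.mem_univ x), rfl⟩
  exact le_trans (hK hmem) (le_max_left _ _)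

lemma cluster_le {X : Type*} [TopologicalSpace X] {q : ℕ → X} {p : X}
    (hp : MapClusterPt p atTop q) {g : X → ℝ} (hg : Continuous g) {c : ℝ}
    (h : ∀ᶠ n in atTop, g (q n) ≤ c) : g p ≤ c := by
  by_contra h'
  push_neg at h'
  have hU : {x | c < g x} ∈ 𝓝 p := (isOpen_lt continuous_const hg).mem_nhds h'
  have hfreq := (mapClusterPt_iff_frequently.1 hp) _ hU
  obtain ⟨n, hn1, hn2⟩ := (hfreq.and_eventually h).exists
  exact absurd hn2 (not_le.2 hn1)

lemma cluster_ge {X : Type*} [TopologicalSpace X] {q : ℕ → X} {p : X}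
    (hp : MapClusterPt p atTop q) {g : X → ℝ} (hg : Continuous g) {c : ℝ}
    (h : ∀ᶠ n in atTop, c ≤ g (q n)) : c ≤ g p := by
  have := cluster_le hp hg.neg (c := -c) (h.mono fun n hn => by simpa using hn)
  simpa using this

lemma stable_bound (Φ : LinearCocycle B E) [CompactSpace B] [FiniteDimensional ℝ E]
    (hqh : Φ.IsQuasiHyperbolic) :
    ∃ C : ℝ, 1 ≤ C ∧ ∀ x : B, ∀ v ∈ Φ.stable x, ∀ t ≥ (0:ℝ), ‖Φ.P t x v‖ ≤ C * ‖v‖ := by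
  by_contra hcon
  push_neg at hcon
  have H : ∀ n : ℕ, ∃ (x : B) (v : E), v ∈ Φ.stable x ∧ ‖v‖ = 1 ∧
      ∃ t : ℝ, 0 ≤ t ∧ (n : ℝ) < ‖Φ.P t x v‖ := by
    intro n
    obtain ⟨x, v, hv, t, ht, hlt⟩ := hcon ((n:ℝ) + 1)
      (by have h0 : (0:ℝ) ≤ (n:ℝ) := Nat.cast_nonneg n; linarith)
    have hv0 : v ≠ 0 := by
      rintro rfl
      simp at hlt
    have hnv : 0 < ‖v‖ := norm_pos_iff.2 hv0
    refine ⟨x, ‖v‖⁻¹ • v, (Φ.stable x).smul_mem _ hv, norm_smul_inv_norm hv0,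
      t, ht, ?_⟩
    rw [map_smul, norm_smul, norm_inv, norm_norm]
    rw [lt_inv_mul_iff₀ hnv]
    calc ‖v‖ * (n:ℝ) ≤ ((n:ℝ) + 1) * ‖v‖ := by nlinarith
      _ < ‖Φ.P t x v‖ := hlt
  choose x v hst hn1 t ht hlt using H
  set S : ℕ → Set ℝ := fun n => (fun s => ‖Φ.P s (x n) (v n)‖) '' Set.Ici 0 with hS
  have hzero : ∀ n, ‖Φ.P 0 (x n) (v n)‖ = 1 := by
    intro n; rw [Φ.P_zero]; simpa using hn1 n
  have hSne : ∀ n, (S n).Nonempty := fun n => ⟨_, ⟨0, Set.self_mem_Ici, rfl⟩⟩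
  have hSbdd : ∀ n, BddAbove (S n) := by
    intro n
    obtain ⟨C₀, hC₀⟩ := hst n
    refine ⟨max C₀ 1, ?_⟩
    rintro y ⟨s, hs, rfl⟩
    show ‖Φ.P s (x n) (v n)‖ ≤ max C₀ 1
    rcases eq_or_lt_of_le (Set.mem_Ici.1 hs) with h | h
    · rw [← h, hzero n]; exact le_max_right _ _
    · exact le_trans (hC₀ s h) (le_max_left _ _)
  set M : ℕ → ℝ := fun n => sSup (S n) with hM
  have hMge : ∀ n, ∀ s : ℝ, 0 ≤ s → ‖Φ.P s (x n) (v n)‖ ≤ M n := by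
    intro n s hs
    exact le_csSup (hSbdd n) ⟨s, hs, rfl⟩
  have hM1 : ∀ n, 1 ≤ M n := fun n => by
    rw [← hzero n]; exact hMge n 0 le_rfl
  have hMgt : ∀ n : ℕ, (n : ℝ) < M n := fun n => lt_of_lt_of_le (hlt n) (hMge n _ (ht n))
  have Hs : ∀ n : ℕ, ∃ s : ℝ, 0 ≤ s ∧ M n / 2 < ‖Φ.P s (x n) (v n)‖ := by
    intro n
    obtain ⟨y, ⟨s, hs, rfl⟩, hy⟩ := exists_lt_of_lt_csSup (hSne n)
      (by linarith [hM1 n] : M n / 2 < M n)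
    exact ⟨s, hs, hy⟩
  choose s hs0 hsgt using Hs
  set N : ℕ → ℝ := fun n => ‖Φ.P (s n) (x n) (v n)‖ with hN
  have hNpos : ∀ n, 0 < N n := fun n => lt_of_le_of_lt (by linarith [hM1 n]) (hsgt n)
  set y : ℕ → B := fun n => Φ.flow (s n) (x n) with hy
  set w : ℕ → E := fun n => (N n)⁻¹ • Φ.P (s n) (x n) (v n) with hw
  have hw1 : ∀ n, ‖w n‖ = 1 := by
    intro n
    rw [hw]
    simp only [norm_smul, norm_inv, Real.norm_eq_abs, abs_of_pos (hNpos n)]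
    exact inv_mul_cancel₀ (ne_of_gt (hNpos n))
  have key : ∀ n : ℕ, ∀ r : ℝ, -(s n) ≤ r → ‖Φ.P r (y n) (w n)‖ ≤ 2 := by
    intro n r hr
    have : Φ.P r (y n) (w n) = (N n)⁻¹ • Φ.P (r + s n) (x n) (v n) := by
      rw [hw]
      simp only [map_smul]
      rw [Φ.apply_comp_s13]
    rw [this, norm_smul, norm_inv, Real.norm_eq_abs, abs_of_pos (hNpos n)]
    have h1 : ‖Φ.P (r + s n) (x n) (v n)‖ ≤ M n := hMge n _ (by linarith)
    have h2 : M n ≤ N n * 2 := by linarith [hsgt n]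
    calc (N n)⁻¹ * ‖Φ.P (r + s n) (x n) (v n)‖ ≤ (N n)⁻¹ * (N n * 2) := by
          apply mul_le_mul_of_nonneg_left (le_trans h1 h2)
          exact inv_nonneg.2 (le_of_lt (hNpos n))
      _ = 2 := inv_mul_cancel_left₀ (ne_of_gt (hNpos n)) 2
  have stend : ∀ S₀ : ℝ, ∀ᶠ n in atTop, S₀ ≤ s n := by
    intro S₀
    obtain ⟨K, hK1, hK⟩ := Φ.exists_opNorm_bound S₀
    have hev : ∀ᶠ n : ℕ in atTop, 2 * K < (n : ℝ) :=
      (tendsto_natCast_atTop_atTop (R := ℝ)).eventually (eventually_gt_atTop (2 * K))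
    refine hev.mono fun n hn => ?_
    by_contra hcon2
    push_neg at hcon2
    have hNK : N n ≤ K := by
      calc N n ≤ ‖Φ.P (s n) (x n)‖ * ‖v n‖ := ContinuousLinearMap.le_opNorm _ _
        _ ≤ K * 1 := by
            apply mul_le_mul (hK _ ⟨hs0 n, le_of_lt hcon2⟩ _) (le_of_eq (hn1 n))
              (norm_nonneg _) (by linarith)
        _ = K := mul_one K
    have : (n : ℝ) / 2 < N n := by linarith [hsgt n, hMgt n]
    linarith
  have hcompact : IsCompact ((Set.univ : Set B) ×ˢ Metric.sphere (0:E) 1) :=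
    isCompact_univ.prod (isCompact_sphere 0 1)
  have hmemf : ∀ n : ℕ, (y n, w n) ∈ (Set.univ : Set B) ×ˢ Metric.sphere (0:E) 1 :=
    fun n => Set.mk_mem_prod (Set.mem_univ _) (mem_sphere_zero_iff_norm.2 (hw1 n))
  obtain ⟨⟨p₁, p₂⟩, hpmem, hcl⟩ := hcompact.exists_mapClusterPt
    (f := atTop) (u := fun n => (y n, w n))
    (Filter.le_principal_iff.2 (Filter.mem_map.2 (Filter.Eventually.of_forall hmemf)))
  have hp₂ : ‖p₂‖ = 1 := mem_sphere_zero_iff_norm.1 hpmem.2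
  have hp₂0 : p₂ ≠ 0 := by
    intro h; rw [h, norm_zero] at hp₂; norm_num at hp₂
  have hbdd : ∀ r : ℝ, ‖Φ.P r p₁ p₂‖ ≤ 2 := by
    intro r
    have hg : Continuous fun q : B × E => ‖Φ.P r q.1 q.2‖ := by
      apply Continuous.norm
      exact (Φ.P_cont.comp ((continuous_const (y := r)).prodMk
        continuous_fst)).clm_apply continuous_snd
    exact cluster_le hcl hg ((stend (-r)).mono fun n hn => key n r (by linarith))
  obtain ⟨r, hr⟩ := hqh p₁ p₂ hp₂0 2
  exact absurd (hbdd r) (not_le.2 hr)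

lemma exists_half (Φ : LinearCocycle B E) [CompactSpace B] [FiniteDimensional ℝ E]
    (hqh : Φ.IsQuasiHyperbolic) :
    ∃ τ > (0:ℝ), ∀ x : B, ∀ v ∈ Φ.stable x, ‖Φ.P τ x v‖ ≤ (1/2) * ‖v‖ := by
  obtain ⟨C, hC1, hC⟩ := Φ.stable_bound hqh
  by_contra hcon
  push_neg at hcon
  have H : ∀ n : ℕ, ∃ (x : B) (v : E), v ∈ Φ.stable x ∧ ‖v‖ = 1 ∧
      1/2 < ‖Φ.P ((n:ℝ) + 1) x v‖ := by
    intro n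
    obtain ⟨x, v, hv, hlt⟩ := hcon ((n:ℝ) + 1) (by positivity)
    have hv0 : v ≠ 0 := by
      rintro rfl
      simp at hlt
    have hnv : 0 < ‖v‖ := norm_pos_iff.2 hv0
    refine ⟨x, ‖v‖⁻¹ • v, (Φ.stable x).smul_mem _ hv, norm_smul_inv_norm hv0, ?_⟩
    rw [map_smul, norm_smul, norm_inv, norm_norm, lt_inv_mul_iff₀ hnv]
    calc ‖v‖ * (1/2) = 1/2 * ‖v‖ := by ring
      _ < ‖Φ.P ((n:ℝ) + 1) x v‖ := hlt
  choose x v hst hn1 hlt using H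
  set T : ℕ → ℝ := fun n => (n:ℝ) + 1 with hT
  have hT0 : ∀ n, (0:ℝ) ≤ T n := fun n => by positivity
  set z : ℕ → B := fun n => Φ.flow (T n) (x n) with hz
  set u : ℕ → E := fun n => Φ.P (T n) (x n) (v n) with hu
  have huC : ∀ n, ‖u n‖ ≤ C := by
    intro n
    calc ‖u n‖ ≤ C * ‖v n‖ := hC _ _ (hst n) _ (hT0 n)
      _ = C := by rw [hn1 n, mul_one]
  have key : ∀ n : ℕ, ∀ r : ℝ, -(T n) ≤ r → ‖Φ.P r (z n) (u n)‖ ≤ C * C := by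
    intro n r hr
    have heq : Φ.P r (z n) (u n) = Φ.P (r + T n) (x n) (v n) := Φ.apply_comp_s13 _ _ _ _
    rcases le_total r 0 with h | h
    · rw [heq]
      calc ‖Φ.P (r + T n) (x n) (v n)‖ ≤ C * ‖v n‖ := hC _ _ (hst n) _ (by linarith)
        _ = C * 1 := by rw [hn1 n]
        _ ≤ C * C := by nlinarith
    · have humem : u n ∈ Φ.stable (z n) := Φ.stable_inv (hst n) (hT0 n)
      calc ‖Φ.P r (z n) (u n)‖ ≤ C * ‖u n‖ := hC _ _ humem _ h
        _ ≤ C * C := mul_le_mul_of_nonneg_left (huC n) (by linarith)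
  have hcompact : IsCompact ((Set.univ : Set B) ×ˢ Metric.closedBall (0:E) C) :=
    isCompact_univ.prod (isCompact_closedBall 0 C)
  have hmemf : ∀ n : ℕ, (z n, u n) ∈ (Set.univ : Set B) ×ˢ Metric.closedBall (0:E) C :=
    fun n => Set.mk_mem_prod (Set.mem_univ _) (mem_closedBall_zero_iff.2 (huC n))
  obtain ⟨⟨p₁, p₂⟩, _, hcl⟩ := hcompact.exists_mapClusterPt
    (f := atTop) (u := fun n => (z n, u n))
    (Filter.le_principal_iff.2 (Filter.mem_map.2 (Filter.Eventually.of_forall hmemf)))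
  have hp₂ : (1:ℝ)/2 ≤ ‖p₂‖ := by
    apply cluster_ge hcl (continuous_snd.norm)
    exact Filter.Eventually.of_forall fun n => le_of_lt (hlt n)
  have hp₂0 : p₂ ≠ 0 := by
    intro h; rw [h, norm_zero] at hp₂; norm_num at hp₂
  have hbdd : ∀ r : ℝ, ‖Φ.P r p₁ p₂‖ ≤ C * C := by
    intro r
    have hg : Continuous fun q : B × E => ‖Φ.P r q.1 q.2‖ := by
      apply Continuous.norm
      exact (Φ.P_cont.comp ((continuous_const (y := r)).prodMk
        continuous_fst)).clm_apply continuous_snd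
    have hev : ∀ᶠ n : ℕ in atTop, -r ≤ T n := by
      have : ∀ᶠ n : ℕ in atTop, -r - 1 < (n:ℝ) :=
        (tendsto_natCast_atTop_atTop (R := ℝ)).eventually (eventually_gt_atTop (-r - 1))
      exact this.mono fun n hn => show -r ≤ (n:ℝ) + 1 by linarith
    exact cluster_le hcl hg (hev.mono fun n hn => key n r (by linarith))
  obtain ⟨r, hr⟩ := hqh p₁ p₂ hp₂0 (C * C)
  exact absurd (hbdd r) (not_le.2 hr)

lemma iterate_half (Φ : LinearCocycle B E) {τ : ℝ} (hτ : 0 < τ)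
    (h : ∀ x : B, ∀ v ∈ Φ.stable x, ‖Φ.P τ x v‖ ≤ (1/2) * ‖v‖) :
    ∀ k : ℕ, ∀ x : B, ∀ v ∈ Φ.stable x, ‖Φ.P ((k:ℝ) * τ) x v‖ ≤ (1/2)^k * ‖v‖ := by
  intro k
  induction k with
  | zero =>
    intro x v hv
    simp [Φ.P_zero]
  | succ k ih =>
    intro x v hv
    have h1 : ((k+1 : ℕ):ℝ) * τ = τ + (k:ℝ) * τ := by push_cast; ring
    rw [h1, ← Φ.apply_comp_s13 τ ((k:ℝ)*τ) x v]
    have hmem : Φ.P ((k:ℝ)*τ) x v ∈ Φ.stable (Φ.flow ((k:ℝ)*τ) x) :=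
      Φ.stable_inv hv (by positivity)
    calc ‖Φ.P τ (Φ.flow ((k:ℝ)*τ) x) (Φ.P ((k:ℝ)*τ) x v)‖
        ≤ (1/2) * ‖Φ.P ((k:ℝ)*τ) x v‖ := h _ _ hmem
      _ ≤ (1/2) * ((1/2)^k * ‖v‖) :=
          mul_le_mul_of_nonneg_left (ih x v hv) (by norm_num)
      _ = (1/2)^(k+1) * ‖v‖ := by ring

lemma stable_exp (Φ : LinearCocycle B E) [CompactSpace B] [FiniteDimensional ℝ E]
    (hqh : Φ.IsQuasiHyperbolic) :
    ∃ A > (0:ℝ), ∃ a > (0:ℝ), ∀ x : B, ∀ v ∈ Φ.stable x, ∀ t ≥ (0:ℝ),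
      ‖Φ.P t x v‖ ≤ A * Real.exp (-a * t) * ‖v‖ := by
  obtain ⟨τ, hτ, hhalf⟩ := Φ.exists_half hqh
  obtain ⟨K, hK1, hK⟩ := Φ.exists_opNorm_bound τ
  have hlog2 : 0 < Real.log 2 := Real.log_pos one_lt_two
  refine ⟨2*K, by linarith, Real.log 2 / τ, by positivity, fun x v hv t ht => ?_⟩
  set k := Nat.floor (t / τ) with hk
  have hk1 : (k:ℝ) ≤ t/τ := Nat.floor_le (by positivity)
  have hk2 : t/τ < (k:ℝ) + 1 := Nat.lt_floor_add_one (t/τ)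
  have hkτ : (k:ℝ)*τ ≤ t := (le_div_iff₀ hτ).1 hk1
  have htk : t < ((k:ℝ)+1)*τ := (div_lt_iff₀ hτ).1 hk2
  have hsplit : Φ.P t x v = Φ.P (t - (k:ℝ)*τ) (Φ.flow ((k:ℝ)*τ) x) (Φ.P ((k:ℝ)*τ) x v) := by
    rw [Φ.apply_comp_s13, sub_add_cancel]
  have hexp : (1/2:ℝ)^k ≤ 2 * Real.exp (-(Real.log 2 / τ) * t) := by
    have h12 : (1/2:ℝ) = Real.exp (-Real.log 2) := by
      rw [Real.exp_neg, Real.exp_log two_pos]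
      norm_num
    have e1 : (1/2:ℝ)^k = Real.exp (-((k:ℝ) * Real.log 2)) := by
      rw [h12, ← Real.exp_nat_mul]
      congr 1
      ring
    have e2 : (2:ℝ) * Real.exp (-(Real.log 2 / τ) * t)
        = Real.exp (Real.log 2 - Real.log 2 / τ * t) := by
      rw [Real.exp_sub, Real.exp_log two_pos, neg_mul, Real.exp_neg]
      ring
    rw [e1, e2]
    apply Real.exp_le_exp.2
    have hq : Real.log 2 / τ * t = Real.log 2 * (t / τ) := by
      field_simp
    rw [hq]
    nlinarith [mul_le_mul_of_nonneg_left (le_of_lt hk2) (le_of_lt hlog2)]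
  calc ‖Φ.P t x v‖
      = ‖Φ.P (t - (k:ℝ)*τ) (Φ.flow ((k:ℝ)*τ) x) (Φ.P ((k:ℝ)*τ) x v)‖ := by rw [← hsplit]
    _ ≤ ‖Φ.P (t - (k:ℝ)*τ) (Φ.flow ((k:ℝ)*τ) x)‖ * ‖Φ.P ((k:ℝ)*τ) x v‖ :=
        ContinuousLinearMap.le_opNorm _ _
    _ ≤ K * ((1/2)^k * ‖v‖) := by
        apply mul_le_mul
        · exact hK _ ⟨by linarith, by linarith⟩ _
        · exact Φ.iterate_half hτ hhalf k x v hv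
        · exact norm_nonneg _
        · linarith
    _ ≤ K * (2 * Real.exp (-(Real.log 2 / τ) * t) * ‖v‖) := by
        apply mul_le_mul_of_nonneg_left _ (by linarith)
        exact mul_le_mul_of_nonneg_right hexp (norm_nonneg v)
    _ = 2*K * Real.exp (-(Real.log 2 / τ) * t) * ‖v‖ := by ring

def rev (Φ : LinearCocycle B E) : LinearCocycle B E where
  flow t b := Φ.flow (-t) b
  flow_cont := Φ.flow_cont.comp ((continuous_fst.neg).prodMk continuous_snd)
  flow_zero b := by simpa using Φ.flow_zero b
  flow_add s t b := by
    show Φ.flow (-s) (Φ.flow (-t) b) = Φ.flow (-(s + t)) b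
    rw [Φ.flow_add, neg_add]
  P t b := Φ.P (-t) b
  P_cont := Φ.P_cont.comp ((continuous_fst.neg).prodMk continuous_snd)
  P_zero b := by simpa using Φ.P_zero b
  P_comp s t b := by
    show (Φ.P (-s) (Φ.flow (-t) b)).comp (Φ.P (-t) b) = Φ.P (-(s + t)) b
    rw [Φ.P_comp, neg_add]

lemma rev_P (Φ : LinearCocycle B E) (t : ℝ) (b : B) : Φ.rev.P t b = Φ.P (-t) b := rfl

lemma rev_stable (Φ : LinearCocycle B E) (b : B) (v : E) :
    v ∈ Φ.rev.stable b ↔ v ∈ Φ.unstable b := Iff.rfl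

lemma rev_qh (Φ : LinearCocycle B E) (hqh : Φ.IsQuasiHyperbolic) :
    Φ.rev.IsQuasiHyperbolic := by
  intro b v hv C
  obtain ⟨t, ht⟩ := hqh b v hv C
  refine ⟨-t, ?_⟩
  rw [rev_P, neg_neg]
  exact ht

end LinearCocycle
/-- Uniform exponential contraction on the stable and unstable subspaces of a
quasi-hyperbolic continuous linear cocycle over a compact base. -/
theorem quasi_hyperbolic_exponential_bounds
    [CompactSpace B] [FiniteDimensional ℝ E]
    (Φ : LinearCocycle B E) (hqh : Φ.IsQuasiHyperbolic) :
    ∃ A > (0:ℝ), ∃ a > (0:ℝ), ∀ x : B,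
      (∀ v ∈ Φ.stable x, ∀ t ≥ (0:ℝ),
        ‖Φ.P t x v‖ ≤ A * Real.exp (-a * t) * ‖v‖) ∧
      (∀ v ∈ Φ.unstable x, ∀ t ≥ (0:ℝ),
        ‖Φ.P (-t) x v‖ ≤ A * Real.exp (-a * t) * ‖v‖) := by
  obtain ⟨A₁, hA₁, a₁, ha₁, h₁⟩ := Φ.stable_exp hqh
  obtain ⟨A₂, hA₂, a₂, ha₂, h₂⟩ := Φ.rev.stable_exp (Φ.rev_qh hqh)
  refine ⟨max A₁ A₂, lt_max_of_lt_left hA₁, min a₁ a₂, lt_min ha₁ ha₂, fun x => ⟨?_, ?_⟩⟩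
  · intro v hv t ht
    have step : A₁ * Real.exp (-a₁ * t) * ‖v‖
        ≤ max A₁ A₂ * Real.exp (-(min a₁ a₂) * t) * ‖v‖ := by
      apply mul_le_mul_of_nonneg_right _ (norm_nonneg v)
      apply mul_le_mul (le_max_left _ _) _ (le_of_lt (Real.exp_pos _))
        (le_trans (le_of_lt hA₁) (le_max_left _ _))
      apply Real.exp_le_exp.2
      nlinarith [min_le_left a₁ a₂]
    exact le_trans (h₁ x v hv t ht) step
  · intro v hv t ht
    have hv' : v ∈ Φ.rev.stable x := (Φ.rev_stable x v).2 hv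
    have step : A₂ * Real.exp (-a₂ * t) * ‖v‖
        ≤ max A₁ A₂ * Real.exp (-(min a₁ a₂) * t) * ‖v‖ := by
      apply mul_le_mul_of_nonneg_right _ (norm_nonneg v)
      apply mul_le_mul (le_max_right _ _) _ (le_of_lt (Real.exp_pos _))
        (le_trans (le_of_lt hA₁) (le_max_left _ _))
      apply Real.exp_le_exp.2
      nlinarith [min_le_right a₁ a₂]
    have := h₂ x v hv' t ht
    rw [Φ.rev_P] at this
    exact le_trans this step
end
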